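/- Let m ≥ 3 be an integer, let n ≥ 10 be a natural number with n ≡ 2 (mod 4), and let l be an integer with 1 ≤ l ≤ m−1. Then gcd(3·2^m, 3·2^{m−2}·(n−4) + 3·2^{m−1} − 3·2^l) = 3·2^l. -/

import Mathlib

/-- Pulling out `c * 2 ^ l` leaves `gcd (2 ^ (m - l), 2 ^ (m - l) * t - 1)`, whose second entry
is odd. -/
theorem Nat.gcd_mul_two_pow_mul_sub_mul_two_pow (c t : ℕ) {l m : ℕ} (hlm : l < m) (ht : 0 < t) :
    Nat.gcd (c * 2 ^ m) (c * 2 ^ m * t - c * 2 ^ l) = c * 2 ^ l := by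
  have hsplit : c * 2 ^ m = c * 2 ^ l * 2 ^ (m - l) := by
    rw [mul_assoc, ← pow_add, Nat.add_sub_cancel' hlm.le]
  have hodd : Odd (2 ^ (m - l) * t - 1) := by
    refine Nat.Even.sub_odd (Nat.mul_pos (Nat.two_pow_pos _) ht) ?_ odd_one
    exact (Nat.even_pow.mpr ⟨even_two, by omega⟩).mul_right t
  have hcop : Nat.Coprime (2 ^ (m - l)) (2 ^ (m - l) * t - 1) :=
    (Nat.coprime_two_left.mpr hodd).pow_left _
  have hsub : c * 2 ^ m * t - c * 2 ^ l = c * 2 ^ l * (2 ^ (m - l) * t - 1) := by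
    rw [Nat.mul_sub_one, hsplit, mul_assoc (c * 2 ^ l)]
  rw [hsub, hsplit, Nat.gcd_mul_left, hcop, mul_one]

theorem two_pow_sub_two_mul_sub_four_add_two_pow_sub_one {m n : ℕ} (hm : 2 ≤ m) (hn : 4 ≤ n)
    (h4 : n % 4 = 2) : 2 ^ (m - 2) * (n - 4) + 2 ^ (m - 1) = 2 ^ m * (n / 4) := by
  obtain ⟨k, rfl⟩ : ∃ k, m = k + 2 := ⟨m - 2, by omega⟩
  obtain ⟨q, rfl⟩ : ∃ q, n = 4 * q + 6 := ⟨n / 4 - 1, by omega⟩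
  have hdiv : (4 * q + 6) / 4 = q + 1 := by omega
  simp only [Nat.add_sub_cancel, show k + 2 - 1 = k + 1 by omega, hdiv,
    show 4 * q + 6 - 4 = 4 * q + 2 by omega, pow_succ]
  ring

theorem stmt12 (m n l : ℕ) (hn : 10 ≤ n) (h4 : n % 4 = 2)
    (hl1 : 1 ≤ l) (hlm : l ≤ m - 1) :
    Nat.gcd (3 * 2 ^ m) (3 * 2 ^ (m - 2) * (n - 4) + 3 * 2 ^ (m - 1) - 3 * 2 ^ l) = 3 * 2 ^ l := by
  rw [mul_assoc 3, ← mul_add,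
    two_pow_sub_two_mul_sub_four_add_two_pow_sub_one (by omega) (by omega) h4, ← mul_assoc]
  exact Nat.gcd_mul_two_pow_mul_sub_mul_two_pow 3 (n / 4) (by omega) (by omega)
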